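/- arXiv:1312.0669 — 2 statements merged into one kernel-verified Lean document; each statement's English description precedes it below -/
import Mathlib

section
/- Let (X,d) be a metric space and f : X → X a perfect mapping. Then the co-compact entropy of f is at most Bowen's entropy of f: c(f) ≤ h_d(f). -/
open Set Filter Topology ENNReal

section Defs

variable {X Y : Type*}

/-- An open set with compact complement. -/
def IsCoCompactOpen [TopologicalSpace X] (U : Set X) : Prop :=
  IsOpen U ∧ IsCompact Uᶜ

/-- A co-compact open cover: every member is co-compact open, and the family covers `X`. -/
def IsCoCompactCover [TopologicalSpace X] (𝒰 : Set (Set X)) : Prop :=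
  (∀ U ∈ 𝒰, IsCoCompactOpen U) ∧ ⋃₀ 𝒰 = Set.univ

/-- A perfect map: continuous, closed, with compact fibers. -/
def IsPerfectMap [TopologicalSpace X] [TopologicalSpace Y] (f : X → Y) : Prop :=
  Continuous f ∧ IsClosedMap f ∧ ∀ y : Y, IsCompact (f ⁻¹' {y})

/-- `coverN 𝒰` : the minimal cardinality of a finite subcover of `𝒰`. -/
noncomputable def coverN (𝒰 : Set (Set X)) : ℕ :=
  sInf {n | ∃ 𝒱 : Finset (Set X), ↑𝒱 ⊆ 𝒰 ∧ ⋃₀ (𝒱 : Set (Set X)) = Set.univ ∧ 𝒱.card = n}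

/-- `H(𝒰) = log N(𝒰)`, as a real number. -/
noncomputable def covHR (𝒰 : Set (Set X)) : ℝ :=
  Real.log (coverN 𝒰)

/-- `H(𝒰) = log N(𝒰)`, as an extended nonnegative real. -/
noncomputable def covH (𝒰 : Set (Set X)) : ℝ≥0∞ :=
  ENNReal.ofReal (Real.log (coverN 𝒰))

/-- The join `𝒰 ∨ 𝒱 = {U ∩ V : U ∈ 𝒰, V ∈ 𝒱}` of two covers. -/
def covJoin (𝒰 𝒱 : Set (Set X)) : Set (Set X) :=
  Set.image2 (· ∩ ·) 𝒰 𝒱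

/-- The preimage cover `f⁻¹(𝒰) = {f⁻¹(U) : U ∈ 𝒰}`. -/
def preimCover (f : X → Y) (𝒰 : Set (Set Y)) : Set (Set X) :=
  (fun U => f ⁻¹' U) '' 𝒰

/-- The iterated join `⋁_{i=0}^{n-1} f⁻ⁱ(𝒰)`. -/
def iterJoin (f : X → X) (𝒰 : Set (Set X)) (n : ℕ) : Set (Set X) :=
  {W | ∃ u : Fin n → Set X, (∀ i, u i ∈ 𝒰) ∧ W = ⋂ i : Fin n, f^[(i : ℕ)] ⁻¹' u i}

/-- The co-compact entropy of `f` relative to the cover `𝒰`: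
`c(f,𝒰) = lim_n (1/n) H(⋁_{i=0}^{n-1} f⁻ⁱ(𝒰))` (realized as a `limsup`). -/
noncomputable def cEntCover (f : X → X) (𝒰 : Set (Set X)) : ℝ≥0∞ :=
  Filter.atTop.limsup fun n : ℕ => covH (iterJoin f 𝒰 n) / (n : ℝ≥0∞)

/-- The co-compact entropy `c(f) = sup_𝒰 c(f,𝒰)` over all co-compact open covers. -/
noncomputable def cEnt [TopologicalSpace X] (f : X → X) : ℝ≥0∞ :=
  ⨆ (𝒰 : Set (Set X)) (_ : IsCoCompactCover 𝒰), cEntCover f 𝒰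

end Defs

section MetricDefs

variable {X : Type*}

/-- `E` is `(n,ε)`-separated for `f` w.r.t. the distance function `d`. -/
def IsNSepSet (d : X → X → ℝ) (f : X → X) (n : ℕ) (ε : ℝ) (E : Set X) : Prop :=
  ∀ x ∈ E, ∀ y ∈ E, x ≠ y → ∃ j < n, ε < d (f^[j] x) (f^[j] y)

/-- `s_n(ε,K,f)`: the maximal cardinality of an `(n,ε)`-separated subset of `K`. -/
noncomputable def sepCard (d : X → X → ℝ) (f : X → X) (n : ℕ) (ε : ℝ) (K : Set X) : ℝ≥0∞ :=
  ⨆ (E : Finset X) (_ : ↑E ⊆ K ∧ IsNSepSet d f n ε ↑E), (E.card : ℝ≥0∞)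

/-- Logarithm on `ℝ≥0∞`, with `elog ⊤ = ⊤`, truncated at `0` below. -/
noncomputable def elog (x : ℝ≥0∞) : ℝ≥0∞ :=
  if x = ⊤ then ⊤ else ENNReal.ofReal (Real.log x.toReal)

/-- `s(ε,K,f) = limsup_n (1/n) log s_n(ε,K,f)`. -/
noncomputable def sepEntEps (d : X → X → ℝ) (f : X → X) (ε : ℝ) (K : Set X) : ℝ≥0∞ :=
  Filter.atTop.limsup fun n : ℕ => elog (sepCard d f n ε K) / (n : ℝ≥0∞)

/-- `s(K,f) = lim_{ε→0} s(ε,K,f)` (the limit of the monotone family, i.e. the supremum). -/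
noncomputable def sepEnt (d : X → X → ℝ) (f : X → X) (K : Set X) : ℝ≥0∞ :=
  ⨆ (ε : ℝ) (_ : 0 < ε), sepEntEps d f ε K

/-- Bowen's entropy `h_d(f) = sup_K s(K,f)`, supremum over compact subsets. -/
noncomputable def bowenEnt [TopologicalSpace X] (d : X → X → ℝ) (f : X → X) : ℝ≥0∞ :=
  ⨆ (K : Set X) (_ : IsCompact K), sepEnt d f K

/-- The `d`-entropy `h^d(f) = s(X,f)`. -/
noncomputable def dEnt (d : X → X → ℝ) (f : X → X) : ℝ≥0∞ :=
  sepEnt d f Set.univ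

/-- A metric space structure on `X` is of compact type (relative to the ambient topology on
`X`) if it extends to a metric on the one-point compactification `OnePoint X` inducing the
topology of `OnePoint X`. -/
def IsCompactTypeMetric [TopologicalSpace X] (m : MetricSpace X) : Prop :=
  ∃ mc : MetricSpace (OnePoint X),
    mc.toUniformSpace.toTopologicalSpace = (inferInstance : TopologicalSpace (OnePoint X)) ∧
    ∀ x y : X, mc.dist ↑x ↑y = m.dist x y

/-- The extension of `f : X → X` to the one-point compactification, fixing `∞`. -/
def onePointExtend (f : X → X) : OnePoint X → OnePoint X :=
  fun p => Option.rec OnePoint.infty (fun x => (↑(f x) : OnePoint X)) p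

end MetricDefs

section MeasureDefs

open MeasureTheory

variable {X : Type*}

/-- A finite Borel partition of `X`. -/
def IsFinBorelPartition [MeasurableSpace X] (P : Finset (Set X)) : Prop :=
  (∀ A ∈ P, MeasurableSet A) ∧ ⋃₀ (P : Set (Set X)) = Set.univ ∧
    ∀ A ∈ P, ∀ B ∈ P, A ≠ B → A ∩ B = ∅

/-- `φ(x) = -x log x` (with `φ(0) = 0`). -/
noncomputable def phiEnt (x : ℝ) : ℝ := -(x * Real.log x)

/-- `H_μ(⋁_{i=0}^{n-1} f⁻ⁱ𝒜) = Σ_{B} φ(μ(B))`, the sum over the cells of the iterated join of the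
partition `P` (cells indexed by tuples of members of `P`; repeated empty cells contribute `0`). -/
noncomputable def partEntSum [MeasurableSpace X] (μ : Measure X) (f : X → X)
    (P : Finset (Set X)) (n : ℕ) : ℝ :=
  ∑ u : Fin n → {A // A ∈ P}, phiEnt ((μ (⋂ i : Fin n, f^[(i : ℕ)] ⁻¹' (u i : Set X))).toReal)

/-- The measure-theoretic (Kolmogorov–Sinai) entropy `h_μ(f)`. -/
noncomputable def measEnt [MeasurableSpace X] (μ : Measure X) (f : X → X) : ℝ≥0∞ :=
  ⨆ (P : Finset (Set X)) (_ : IsFinBorelPartition P),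
    Filter.atTop.limsup fun n : ℕ => ENNReal.ofReal (partEntSum μ f P n) / (n : ℝ≥0∞)

end MeasureDefs

/-!
Fix a co-compact open cover `𝒰` and some `U₀ ∈ 𝒰`; then `K = U₀ᶜ` is compact, so `𝒰` has a
Lebesgue number `ε` on all of `X`. Up to time `n` an orbit either stays in `U₀`, or first leaves
it at some time `i < n`, at a point whose next `n` iterates are `ε`-shadowed by those of a point of
a maximal `(n,ε)`-separated subset of `K`. This gives a subcover of `⋁_{i<n} f⁻ⁱ𝒰` with at most
`1 + n·s_n(ε,K,f)` members, hence `c(f,𝒰) ≤ s(ε,K,f) ≤ h_d(f)`.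
-/

open Metric

section SeparatedSets

variable {X : Type*}

def IsNSpanSet (d : X → X → ℝ) (f : X → X) (n : ℕ) (ε : ℝ) (K E : Set X) : Prop :=
  ∀ y ∈ K, ∃ e ∈ E, ∀ j < n, d (f^[j] y) (f^[j] e) ≤ ε

variable {d : X → X → ℝ} {f : X → X} {n : ℕ} {ε : ℝ} {K : Set X}

lemma le_sepCard {E : Finset X} (hEK : ↑E ⊆ K) (hE : IsNSepSet d f n ε E) :
    (E.card : ℝ≥0∞) ≤ sepCard d f n ε K :=
  le_iSup₂ (f := fun (E : Finset X) (_ : ↑E ⊆ K ∧ IsNSepSet d f n ε E) => (E.card : ℝ≥0∞))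
    E ⟨hEK, hE⟩

variable [PseudoMetricSpace X]

lemma IsNSepSet.insert {E : Set X} (hE : IsNSepSet dist f n ε E) {y : X}
    (hy : ∀ e ∈ E, ∃ j < n, ε < dist (f^[j] y) (f^[j] e)) :
    IsNSepSet dist f n ε (insert y E) := by
  rintro a (rfl | ha) b (rfl | hb) hab
  · exact absurd rfl hab
  · exact hy b hb
  · simpa only [dist_comm] using hy a ha
  · exact hE a ha b hb hab

/-- Otherwise points could be added one at a time to get separated sets of every size. -/
lemma exists_isNSepSet_isNSpanSet (hε : 0 ≤ ε) (hK : sepCard dist f n ε K ≠ ⊤) :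
    ∃ E : Finset X, ↑E ⊆ K ∧ IsNSepSet dist f n ε E ∧ IsNSpanSet dist f n ε K E := by
  classical
  by_contra! hnone
  have hlarge : ∀ m : ℕ, ∃ E : Finset X, ↑E ⊆ K ∧ IsNSepSet dist f n ε E ∧ E.card = m := by
    intro m
    induction m with
    | zero => exact ⟨∅, by simp, by simp [IsNSepSet], rfl⟩
    | succ m ih =>
      obtain ⟨E, hEK, hE, rfl⟩ := ih
      obtain ⟨y, hyK, hy⟩ : ∃ y ∈ K, ∀ e ∈ E, ∃ j < n, ε < dist (f^[j] y) (f^[j] e) := by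
        simpa [IsNSpanSet] using hnone E hEK hE
      have hyE : y ∉ E := fun hyE => by
        obtain ⟨j, -, hj⟩ := hy y hyE
        simp only [dist_self] at hj
        linarith
      refine ⟨insert y E, ?_, ?_, Finset.card_insert_of_notMem hyE⟩
      · simpa using Set.insert_subset hyK hEK
      · simpa using hE.insert hy
  refine hK (ENNReal.eq_top_of_forall_nnreal_le fun r => ?_)
  obtain ⟨E, hEK, hE, hcard⟩ := hlarge ⌈r⌉₊
  calc (r : ℝ≥0∞) ≤ (⌈r⌉₊ : ℝ≥0∞) := by exact_mod_cast Nat.le_ceil r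
    _ = E.card := by rw [hcard]
    _ ≤ sepCard dist f n ε K := le_sepCard hEK hE

end SeparatedSets

section Cover

variable {X : Type*}

lemma coverN_le_card {𝒰 : Set (Set X)} {𝒱 : Finset (Set X)} (h𝒱 : ↑𝒱 ⊆ 𝒰)
    (hcov : ⋃₀ (𝒱 : Set (Set X)) = univ) : coverN 𝒰 ≤ 𝒱.card :=
  Nat.sInf_le ⟨𝒱, h𝒱, hcov, rfl⟩

lemma coverN_eq_zero [IsEmpty X] (𝒰 : Set (Set X)) : coverN 𝒰 = 0 :=
  Nat.eq_zero_of_le_zero <| coverN_le_card (𝒱 := ∅) (by simp) (Subsingleton.elim _ _)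

lemma cEntCover_eq_zero [IsEmpty X] (f : X → X) (𝒰 : Set (Set X)) : cEntCover f 𝒰 = 0 := by
  simp [cEntCover, covH, coverN_eq_zero]

lemma covH_le_of_coverN_le {𝒰 : Set (Set X)} {n s : ℕ} (hn : 1 ≤ n)
    (h : coverN 𝒰 ≤ 1 + n * s) :
    covH 𝒰 ≤ ENNReal.ofReal (Real.log (2 * n)) + ENNReal.ofReal (Real.log s) := by
  rcases (coverN 𝒰).eq_zero_or_pos with h0 | hc
  · simp [covH, h0]
  rcases s.eq_zero_or_pos with rfl | hs
  · simp [covH, show coverN 𝒰 = 1 by lia]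
  have hns : 1 + n * s ≤ 2 * n * s := by nlinarith
  have hc' : (coverN 𝒰 : ℝ) ≤ 2 * n * s := by exact_mod_cast h.trans hns
  rw [covH, ← ENNReal.ofReal_add (Real.log_nonneg (by norm_cast; lia))
    (Real.log_natCast_nonneg s), ← Real.log_mul (by positivity) (by positivity)]
  exact ENNReal.ofReal_le_ofReal (Real.log_le_log (by exact_mod_cast hc) hc')

variable [PseudoMetricSpace X]

lemma exists_forall_closedBall_subset_of_isCompact_compl {𝒰 : Set (Set X)}
    (hopen : ∀ U ∈ 𝒰, IsOpen U) (hcov : ⋃₀ 𝒰 = univ) {U₀ : Set X} (hU₀ : U₀ ∈ 𝒰)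
    (hK : IsCompact U₀ᶜ) : ∃ ε > 0, ∀ x, ∃ U ∈ 𝒰, closedBall x ε ⊆ U := by
  obtain ⟨δ, hδ, hleb⟩ :=
    lebesgue_number_lemma_of_metric_sUnion hK hopen (hcov ▸ subset_univ _)
  refine ⟨δ / 3, by positivity, fun x => ?_⟩
  by_cases hx : closedBall x (δ / 3) ⊆ U₀
  · exact ⟨U₀, hU₀, hx⟩
  obtain ⟨y, hyx, hyK⟩ := not_subset.mp hx
  obtain ⟨U, hU, hyU⟩ := hleb y hyK
  refine ⟨U, hU, (closedBall_subset_ball' ?_).trans hyU⟩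
  rw [mem_closedBall, dist_comm] at hyx
  linarith

/-- Cover `⋁_{i<n} f⁻ⁱ𝒰` by the cell of points whose orbit stays in `U₀` up to time `n`, and,
for each time `i < n` and `e ∈ E`, the cell of points that stay in `U₀` before time `i` and whose
orbit from time `i` on is shadowed by that of `e`. -/
lemma coverN_iterJoin_le {𝒰 : Set (Set X)} {U₀ : Set X} (hU₀ : U₀ ∈ 𝒰) {ε : ℝ}
    (hleb : ∀ x, ∃ U ∈ 𝒰, closedBall x ε ⊆ U) (f : X → X) (n : ℕ) {E : Finset X}
    (hE : IsNSpanSet dist f n ε U₀ᶜ E) : coverN (iterJoin f 𝒰 n) ≤ 1 + n * E.card := by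
  classical
  choose ℓ hℓ𝒰 hℓ using hleb
  let stay : Set X := ⋂ j : Fin n, f^[j] ⁻¹' U₀
  let cell (p : ℕ × X) : Set X :=
    ⋂ j : Fin n, f^[j] ⁻¹' (if (j : ℕ) < p.1 then U₀ else ℓ (f^[j - p.1] p.2))
  let 𝒲 : Finset (Set X) := insert stay ((Finset.range n ×ˢ E).image cell)
  have h𝒲 : ↑𝒲 ⊆ iterJoin f 𝒰 n := by
    intro W hW
    simp only [𝒲, Finset.coe_insert, Finset.coe_image, mem_insert_iff, mem_image] at hW
    rcases hW with rfl | ⟨p, -, rfl⟩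
    · exact ⟨fun _ => U₀, fun _ => hU₀, rfl⟩
    · refine ⟨_, fun j => ?_, rfl⟩
      split_ifs
      exacts [hU₀, hℓ𝒰 _]
  have hcov : ⋃₀ (𝒲 : Set (Set X)) = univ := by
    refine eq_univ_of_forall fun x => ?_
    by_cases hexit : ∃ i < n, f^[i] x ∉ U₀
    · obtain ⟨hin, hiK⟩ := Nat.find_spec hexit
      obtain ⟨e, he, hshadow⟩ := hE _ hiK
      refine ⟨cell (Nat.find hexit, e), Finset.mem_insert_of_mem
        (Finset.mem_image_of_mem _ (Finset.mem_product.mpr ⟨Finset.mem_range.mpr hin, he⟩)),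
        mem_iInter.mpr fun j => ?_⟩
      simp only [mem_preimage]
      split_ifs with hj
      · by_contra hjU
        exact Nat.find_min hexit hj ⟨hj.trans hin, hjU⟩
      · apply hℓ
        have := hshadow (j - Nat.find hexit) ((Nat.sub_le _ _).trans_lt j.2)
        rwa [← Function.iterate_add_apply, Nat.sub_add_cancel (not_lt.mp hj)] at this
    · push Not at hexit
      exact ⟨stay, Finset.mem_insert_self _ _, mem_iInter.mpr fun j => hexit j j.2⟩
  calc coverN (iterJoin f 𝒰 n) ≤ 𝒲.card := coverN_le_card h𝒲 hcov
    _ ≤ ((Finset.range n ×ˢ E).image cell).card + 1 := Finset.card_insert_le _ _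
    _ ≤ 1 + n * E.card := by
      rw [add_comm]
      grw [Finset.card_image_le, Finset.card_product, Finset.card_range]

end Cover

lemma ofReal_log_le_elog {m : ℕ} {x : ℝ≥0∞} (hm : (m : ℝ≥0∞) ≤ x) :
    ENNReal.ofReal (Real.log m) ≤ elog x := by
  unfold elog
  split_ifs with hx
  · exact le_top
  rcases m.eq_zero_or_pos with rfl | hm0
  · simp
  refine ENNReal.ofReal_le_ofReal (Real.log_le_log (by positivity) ?_)
  simpa using ENNReal.toReal_mono hx hm

lemma tendsto_ofReal_log_two_mul_div_atTop :
    Tendsto (fun n : ℕ => ENNReal.ofReal (Real.log (2 * n)) / n) atTop (𝓝 0) := by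
  have hreal : Tendsto (fun n : ℕ => Real.log (2 * n) / n) atTop (𝓝 0) := by
    have := (Real.tendsto_pow_log_div_mul_add_atTop (1 / 2) 0 1 (by norm_num)).comp
      ((tendsto_natCast_atTop_atTop (R := ℝ)).const_mul_atTop two_pos)
    refine this.congr fun n => ?_
    simp only [Function.comp_apply, pow_one, add_zero]
    ring_nf
  have := ENNReal.tendsto_ofReal hreal
  rw [ENNReal.ofReal_zero] at this
  refine this.congr' ?_
  filter_upwards [eventually_gt_atTop 0] with n hn
  rw [ENNReal.ofReal_div_of_pos (by exact_mod_cast hn), ENNReal.ofReal_natCast]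

section Entropy

variable {X : Type*} [PseudoMetricSpace X] {𝒰 : Set (Set X)} {U₀ : Set X} {ε : ℝ}

lemma covH_iterJoin_div_le (hU₀ : U₀ ∈ 𝒰) (hε : 0 ≤ ε)
    (hleb : ∀ x, ∃ U ∈ 𝒰, closedBall x ε ⊆ U) (f : X → X) {n : ℕ} (hn : 1 ≤ n) :
    covH (iterJoin f 𝒰 n) / n ≤
      elog (sepCard dist f n ε U₀ᶜ) / n + ENNReal.ofReal (Real.log (2 * n)) / n := by
  by_cases htop : sepCard dist f n ε U₀ᶜ = ⊤
  · simp [htop, elog, ENNReal.top_div_of_ne_top]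
  obtain ⟨E, hEK, hEsep, hEspan⟩ := exists_isNSepSet_isNSpanSet hε htop
  calc covH (iterJoin f 𝒰 n) / n
      ≤ (ENNReal.ofReal (Real.log (2 * n)) + ENNReal.ofReal (Real.log E.card)) / n := by
        gcongr
        exact covH_le_of_coverN_le hn (coverN_iterJoin_le hU₀ hleb f n hEspan)
    _ ≤ (ENNReal.ofReal (Real.log (2 * n)) + elog (sepCard dist f n ε U₀ᶜ)) / n := by
        gcongr
        exact ofReal_log_le_elog (le_sepCard hEK hEsep)
    _ = _ := by rw [ENNReal.add_div, add_comm]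

lemma cEntCover_le_sepEntEps (hU₀ : U₀ ∈ 𝒰) (hε : 0 ≤ ε)
    (hleb : ∀ x, ∃ U ∈ 𝒰, closedBall x ε ⊆ U) (f : X → X) :
    cEntCover f 𝒰 ≤ sepEntEps dist f ε U₀ᶜ :=
  calc cEntCover f 𝒰
      ≤ atTop.limsup (fun n : ℕ => elog (sepCard dist f n ε U₀ᶜ) / n +
          ENNReal.ofReal (Real.log (2 * n)) / n) :=
        limsup_le_limsup (eventually_atTop.mpr ⟨1, fun _ => covH_iterJoin_div_le hU₀ hε hleb f⟩)
    _ = sepEntEps dist f ε U₀ᶜ :=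
        ENNReal.limsup_add_of_right_tendsto_zero tendsto_ofReal_log_two_mul_div_atTop _

end Entropy

theorem cEnt_le_bowenEnt_general {X : Type*} [MetricSpace X] (f : X → X) :
    cEnt f ≤ bowenEnt dist f := by
  refine iSup₂_le fun 𝒰 h𝒰 => ?_
  rcases 𝒰.eq_empty_or_nonempty with rfl | ⟨U₀, hU₀⟩
  · have : IsEmpty X := univ_eq_empty_iff.mp (by simpa [eq_comm] using h𝒰.2)
    simp [cEntCover_eq_zero]
  have hU₀c : IsCompact U₀ᶜ := (h𝒰.1 U₀ hU₀).2
  obtain ⟨ε, hε, hleb⟩ := exists_forall_closedBall_subset_of_isCompact_compl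
    (fun U hU => (h𝒰.1 U hU).1) h𝒰.2 hU₀ hU₀c
  calc cEntCover f 𝒰 ≤ sepEntEps dist f ε U₀ᶜ := cEntCover_le_sepEntEps hU₀ hε.le hleb f
    _ ≤ sepEnt dist f U₀ᶜ := le_iSup₂_of_le ε hε le_rfl
    _ ≤ bowenEnt dist f := le_iSup₂_of_le U₀ᶜ hU₀c le_rfl

/-- For a perfect map `f` on a metric space `(X,d)`, the co-compact entropy of `f`
is at most Bowen's entropy: `c(f) ≤ h_d(f)`. -/
theorem cEnt_le_bowenEnt {X : Type*} [MetricSpace X] (f : X → X) (hf : IsPerfectMap f) :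
    cEnt f ≤ bowenEnt dist f :=
  cEnt_le_bowenEnt_general f
end

section
/- Let X be a locally compact separable metric space, f : X → X a perfect mapping, and d a metric of compact type on X with extension d̃ to the one-point compactification X̃. Let f̃ : X̃ → X̃ be the extension of f to X̃ fixing the point at infinity. Then h^d(f) = h^{d̃}(f̃), and furthermore c(f) = c(f̃). -/
open Set Filter Topology ENNReal

/-!
The `d`-entropy part is combinatorial. An `(n, ε)`-separated subset of `X` stays separated in
`OnePoint X`, and an `(n, ε)`-separated subset of `OnePoint X` loses at most the point `∞` on
restriction to `X`; the two counts differ by at most one, which changes no exponential growth rate.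

For co-compact entropy, `U ↦ insert ∞ U` carries co-compact covers of `X` to open covers of
`OnePoint X` with the same join numbers, which gives `c(f) ≤ c(f̃)`. Conversely, take an open cover
`𝒲` of `OnePoint X` and a member `W₀ ∋ ∞`, and enlarge every cell of the `m`-fold join by
`C₀ = ⋂_{j<m} f̃⁻ʲ W₀`. As `f` is proper, `f̃` is continuous, so the enlarged cells are open
neighbourhoods of `∞` and come from a co-compact cover of `X`. Enlarging costs at most a factor `2`
per block of length `m`, so `m c(f̃, 𝒲) ≤ log 2 + c(f̃ᵐ, 𝒱) ≤ log 2 + m c(f)`; let `m → ∞`.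
-/

lemma onePointExtend_eq_map {X : Type*} (f : X → X) : onePointExtend f = OnePoint.map f := by
  funext p
  cases p <;> rfl

namespace OnePoint

variable {X : Type*}

lemma map_iterate (f : X → X) (n : ℕ) : (OnePoint.map f)^[n] = OnePoint.map f^[n] := by
  induction n with
  | zero => exact map_id.symm
  | succ n ih => rw [Function.iterate_succ, ih, ← map_comp, ← Function.iterate_succ]

lemma map_iterate_coe (f : X → X) (n : ℕ) (x : X) :
    (OnePoint.map f)^[n] (x : OnePoint X) = ↑(f^[n] x) := by
  rw [map_iterate, map_some]

lemma map_iterate_infty (f : X → X) (n : ℕ) :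
    (OnePoint.map f)^[n] (∞ : OnePoint X) = (∞ : OnePoint X) := by
  rw [map_iterate, map_infty]

end OnePoint

open OnePoint

section GrowthRate

lemma limsup_div_le_limsup_div_of_le_add {u v : ℕ → ℝ≥0∞} {c : ℝ≥0∞} (hc : c ≠ ⊤)
    (h : ∀ᶠ n in atTop, u n ≤ v n + c) :
    atTop.limsup (fun n : ℕ => u n / n) ≤ atTop.limsup (fun n : ℕ => v n / n) := by
  have hc0 : Tendsto (fun n : ℕ => c / n) atTop (𝓝 0) := by
    simpa [div_eq_mul_inv] using ENNReal.Tendsto.const_mul ENNReal.tendsto_inv_nat_nhds_zero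
      (Or.inr hc)
  calc atTop.limsup (fun n : ℕ => u n / n)
      ≤ atTop.limsup ((fun n : ℕ => v n / n) + fun n : ℕ => c / n) :=
        limsup_le_limsup (h.mono fun n hn => by
          simpa only [Pi.add_apply, ← ENNReal.add_div] using ENNReal.div_le_div_right hn _)
    _ = atTop.limsup (fun n : ℕ => v n / n) := ENNReal.limsup_add_of_right_tendsto_zero hc0 _

lemma limsup_div_le_of_le_mul_add {u : ℕ → ℝ≥0∞} {r c : ℝ≥0∞} (hc : c ≠ ⊤)
    (h : ∀ᶠ n in atTop, u n ≤ n * r + c) : atTop.limsup (fun n : ℕ => u n / n) ≤ r := by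
  refine (limsup_div_le_limsup_div_of_le_add hc h).trans (le_of_eq ?_)
  refine (tendsto_const_nhds.congr' ?_).limsup_eq
  filter_upwards [eventually_ge_atTop 1] with n hn
  rw [mul_comm]
  exact (ENNReal.mul_div_cancel_right (by exact_mod_cast (by omega : n ≠ 0))
    (ENNReal.natCast_ne_top n)).symm

lemma nat_mul_limsup_div_le {a c : ℕ → ℝ≥0∞} {ℓ : ℝ≥0∞} {m : ℕ} (hm : 0 < m) (hℓ : ℓ ≠ ⊤)
    (h : ∀ N q, N ≤ m * q → a N ≤ q * ℓ + c q) :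
    m * atTop.limsup (fun N : ℕ => a N / N) ≤ ℓ + atTop.limsup (fun q : ℕ => c q / q) := by
  set L := atTop.limsup (fun q : ℕ => c q / q)
  refine ENNReal.le_of_forall_pos_le_add fun ε hε hfin => ?_
  have hL : L ≠ ⊤ := (lt_of_le_of_lt le_add_self hfin).ne
  set D := L + ε
  have hD : D ≠ ⊤ := ENNReal.add_ne_top.2 ⟨hL, ENNReal.coe_ne_top⟩
  obtain ⟨Q, hQ⟩ := eventually_atTop.1 <| (eventually_lt_of_limsup_lt
    (ENNReal.lt_add_right hL (ENNReal.coe_ne_zero.2 hε.ne'))).and (eventually_ge_atTop 1)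
  have hcq : ∀ q ≥ Q, c q ≤ q * D := fun q hq => by
    have hq0 : (q : ℝ≥0∞) ≠ 0 := by exact_mod_cast (by have := (hQ q hq).2; omega : q ≠ 0)
    have := (hQ q hq).1
    rw [ENNReal.div_lt_iff (Or.inl hq0) (Or.inl (ENNReal.natCast_ne_top q))] at this
    rw [mul_comm]
    exact this.le
  have hbound : ∀ᶠ N in atTop, m * a N ≤ N * (ℓ + D) + m * (ℓ + D) := by
    filter_upwards [eventually_ge_atTop (m * Q)] with N hN
    have hq : Q ≤ N / m + 1 := by
      have : Q ≤ N / m := (Nat.le_div_iff_mul_le hm).2 (by rw [Nat.mul_comm]; exact hN)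
      omega
    have hmq : m * (N / m + 1) ≤ N + m := by
      rw [Nat.mul_add, mul_one]
      exact Nat.add_le_add_right (Nat.mul_div_le N m) m
    calc (m : ℝ≥0∞) * a N ≤ m * ((N / m + 1 : ℕ) * ℓ + (N / m + 1 : ℕ) * D) := by
          gcongr
          exact (h N _ (Nat.lt_mul_div_succ N hm).le).trans (by gcongr; exact hcq _ hq)
      _ = ((m * (N / m + 1) : ℕ) : ℝ≥0∞) * (ℓ + D) := by push_cast; ring
      _ ≤ ((N + m : ℕ) : ℝ≥0∞) * (ℓ + D) := by gcongr
      _ = N * (ℓ + D) + m * (ℓ + D) := by push_cast; ring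
  calc (m : ℝ≥0∞) * atTop.limsup (fun N : ℕ => a N / N)
      = atTop.limsup (fun N : ℕ => m * a N / N) := by
        simp_rw [mul_div_assoc]
        exact (ENNReal.limsup_const_mul_of_ne_top (ENNReal.natCast_ne_top m)).symm
    _ ≤ ℓ + D := limsup_div_le_of_le_mul_add
        (ENNReal.mul_ne_top (ENNReal.natCast_ne_top m) (ENNReal.add_ne_top.2 ⟨hℓ, hD⟩)) hbound
    _ = ℓ + L + ε := (add_assoc _ _ _).symm

lemma le_of_forall_nat_mul_le_add {x y ℓ : ℝ≥0∞} (hℓ : ℓ ≠ ⊤)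
    (h : ∀ m : ℕ, 0 < m → m * x ≤ ℓ + m * y) : x ≤ y := by
  refine ENNReal.le_of_forall_pos_le_add fun ε hε _ => ?_
  have hε0 : (ε : ℝ≥0∞) ≠ 0 := ENNReal.coe_ne_zero.2 hε.ne'
  obtain ⟨m, hm⟩ := ENNReal.exists_nat_gt (ENNReal.div_lt_top hℓ hε0).ne
  have hm0 : (m : ℝ≥0∞) ≠ 0 := (lt_of_le_of_lt zero_le hm).ne'
  have hℓm : ℓ ≤ m * ε := by
    rw [ENNReal.div_lt_iff (Or.inl hε0) (Or.inl ENNReal.coe_ne_top)] at hm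
    exact hm.le
  refine (ENNReal.mul_le_mul_iff_right hm0 (ENNReal.natCast_ne_top m)).1 ?_
  calc (m : ℝ≥0∞) * x ≤ ℓ + m * y := h m (by exact_mod_cast pos_iff_ne_zero.2 hm0)
    _ ≤ m * ε + m * y := by gcongr
    _ = m * (y + ε) := by ring

end GrowthRate

section SeparatedSets

lemma elog_mono : Monotone elog := by
  intro x y hxy
  rcases eq_or_ne y ⊤ with rfl | hy
  · simp [elog]
  have hx : x ≠ ⊤ := ne_top_of_le_ne_top hy hxy
  rw [elog, elog, if_neg hx, if_neg hy]
  rcases eq_or_ne x 0 with rfl | hx0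
  · simp
  exact ENNReal.ofReal_le_ofReal <| Real.log_le_log (ENNReal.toReal_pos hx0 hx)
    ((ENNReal.toReal_le_toReal hx hy).2 hxy)

lemma elog_add_one_le (x : ℝ≥0∞) : elog (x + 1) ≤ elog x + ENNReal.ofReal (Real.log 2) := by
  rcases eq_or_ne x ⊤ with rfl | hx
  · simp [elog]
  rcases le_or_gt x 1 with hx1 | hx1
  · have h2 : x + 1 ≤ 2 := by simpa [one_add_one_eq_two] using add_le_add_left hx1 1
    calc elog (x + 1) ≤ elog 2 := elog_mono h2
      _ = ENNReal.ofReal (Real.log 2) := by simp [elog]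
      _ ≤ elog x + ENNReal.ofReal (Real.log 2) := le_add_self
  · have hr : 1 < x.toReal := by simpa using (ENNReal.toReal_lt_toReal (by simp) hx).2 hx1
    rw [elog, elog, if_neg (by simpa using hx), if_neg hx,
      ENNReal.toReal_add hx ENNReal.one_ne_top, ENNReal.toReal_one]
    calc ENNReal.ofReal (Real.log (x.toReal + 1))
        ≤ ENNReal.ofReal (Real.log x.toReal + Real.log 2) := by
          gcongr
          rw [← Real.log_mul (by positivity) two_ne_zero]
          exact Real.log_le_log (by positivity) (by linarith)
      _ ≤ ENNReal.ofReal (Real.log x.toReal) + ENNReal.ofReal (Real.log 2) :=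
          ENNReal.ofReal_add_le

variable {X : Type*} {d : X → X → ℝ} {d' : OnePoint X → OnePoint X → ℝ}

lemma sepCard_le_sepCard_map (hext : ∀ x y : X, d' x y = d x y) (f : X → X) (n : ℕ) (ε : ℝ) :
    sepCard d f n ε univ ≤ sepCard d' (OnePoint.map f) n ε univ := by
  classical
  refine iSup₂_le fun E hE => le_iSup₂_of_le (E.image (↑)) ⟨subset_univ _, ?_⟩ ?_
  · simp only [Finset.coe_image]
    rintro _ ⟨x, hx, rfl⟩ _ ⟨y, hy, rfl⟩ hxy
    obtain ⟨j, hj, hsep⟩ := hE.2 x hx y hy (ne_of_apply_ne _ hxy)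
    exact ⟨j, hj, by rwa [map_iterate_coe, map_iterate_coe, hext]⟩
  · rw [Finset.card_image_of_injective _ OnePoint.coe_injective]

lemma sepCard_map_le_add_one (hext : ∀ x y : X, d' x y = d x y) (f : X → X) (n : ℕ)
    (ε : ℝ) : sepCard d' (OnePoint.map f) n ε univ ≤ sepCard d f n ε univ + 1 := by
  classical
  refine iSup₂_le fun E' hE' => ?_
  set E : Finset X := E'.preimage (↑) OnePoint.coe_injective.injOn
  have hsep : IsNSepSet d f n ε E := by
    intro x hx y hy hxy
    obtain ⟨j, hj, hd⟩ := hE'.2 x (Finset.mem_preimage.1 hx) y (Finset.mem_preimage.1 hy)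
      (OnePoint.coe_injective.ne hxy)
    exact ⟨j, hj, by rwa [map_iterate_coe, map_iterate_coe, hext] at hd⟩
  have hcard : E'.card ≤ E.card + 1 := by
    calc E'.card ≤ (insert (∞ : OnePoint X) (E.image ((↑) : X → OnePoint X))).card :=
          Finset.card_le_card fun p hp => by
            induction p using OnePoint.rec with
            | infty => exact Finset.mem_insert_self _ _
            | coe x => exact Finset.mem_insert_of_mem (Finset.mem_image_of_mem _
                (Finset.mem_preimage.2 hp))
      _ ≤ (E.image ((↑) : X → OnePoint X)).card + 1 := Finset.card_insert_le _ _
      _ = E.card + 1 := by rw [Finset.card_image_of_injective _ OnePoint.coe_injective]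
  calc (E'.card : ℝ≥0∞) ≤ E.card + 1 := by exact_mod_cast hcard
    _ ≤ sepCard d f n ε univ + 1 := by
        gcongr
        exact le_iSup₂_of_le E ⟨subset_univ _, hsep⟩ le_rfl

lemma sepEntEps_map (hext : ∀ x y : X, d' x y = d x y) (f : X → X) (ε : ℝ) :
    sepEntEps d' (OnePoint.map f) ε univ = sepEntEps d f ε univ := by
  refine le_antisymm ?_ (limsup_le_limsup (Eventually.of_forall fun n => ?_))
  · refine limsup_div_le_limsup_div_of_le_add (c := ENNReal.ofReal (Real.log 2))
      ENNReal.ofReal_ne_top (Eventually.of_forall fun n => ?_)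
    exact (elog_mono (sepCard_map_le_add_one hext f n ε)).trans (elog_add_one_le _)
  · exact ENNReal.div_le_div_right (elog_mono (sepCard_le_sepCard_map hext f n ε)) _

lemma dEnt_map (hext : ∀ x y : X, d' x y = d x y) (f : X → X) :
    dEnt d' (OnePoint.map f) = dEnt d f :=
  iSup_congr fun ε => iSup_congr fun _ => sepEntEps_map hext f ε

end SeparatedSets

section Covers

variable {Z Y : Type*}

def HasFiniteSubcover (𝒰 : Set (Set Z)) : Prop :=
  ∃ V : Finset (Set Z), ↑V ⊆ 𝒰 ∧ ⋃₀ (V : Set (Set Z)) = univ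

lemma coverN_le_card_s13 {𝒰 : Set (Set Z)} {V : Finset (Set Z)} (hV : ↑V ⊆ 𝒰)
    (hcov : ⋃₀ (V : Set (Set Z)) = univ) : coverN 𝒰 ≤ V.card :=
  Nat.sInf_le ⟨V, hV, hcov, rfl⟩

lemma HasFiniteSubcover.exists_card_eq_coverN {𝒰 : Set (Set Z)} (h : HasFiniteSubcover 𝒰) :
    ∃ V : Finset (Set Z), ↑V ⊆ 𝒰 ∧ ⋃₀ (V : Set (Set Z)) = univ ∧ V.card = coverN 𝒰 := by
  obtain ⟨V, hV, hcov⟩ := h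
  exact Nat.sInf_mem (s := {n | ∃ 𝒱 : Finset (Set Z), ↑𝒱 ⊆ 𝒰 ∧ ⋃₀ (𝒱 : Set (Set Z)) = univ ∧
    𝒱.card = n}) ⟨V.card, V, hV, hcov, rfl⟩

lemma HasFiniteSubcover.exists_subcover_card_le_mul {g : Z → Y} {𝒜 : Set (Set Z)}
    {ℬ : Set (Set Y)} {K : ℕ} (hℬ : HasFiniteSubcover ℬ)
    (H : ∀ B ∈ ℬ, ∃ F : Finset (Set Z), ↑F ⊆ 𝒜 ∧ F.card ≤ K ∧ g ⁻¹' B ⊆ ⋃₀ (F : Set (Set Z))) :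
    ∃ V : Finset (Set Z), ↑V ⊆ 𝒜 ∧ ⋃₀ (V : Set (Set Z)) = univ ∧ V.card ≤ K * coverN ℬ := by
  classical
  obtain ⟨V, hV, hcov, hcard⟩ := hℬ.exists_card_eq_coverN
  choose! F hF𝒜 hFK hFcov using H
  refine ⟨V.biUnion F, ?_, eq_univ_of_forall fun z => ?_, ?_⟩
  · simp only [Finset.coe_biUnion, iUnion_subset_iff]
    exact fun B hB => hF𝒜 B (hV hB)
  · obtain ⟨B, hB, hzB⟩ : g z ∈ ⋃₀ (V : Set (Set Y)) := hcov ▸ mem_univ _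
    obtain ⟨A, hA, hzA⟩ := hFcov B (hV hB) hzB
    exact ⟨A, Finset.mem_coe.2 (Finset.mem_biUnion.2 ⟨B, hB, hA⟩), hzA⟩
  · calc (V.biUnion F).card ≤ ∑ B ∈ V, (F B).card := Finset.card_biUnion_le
      _ ≤ ∑ _B ∈ V, K := Finset.sum_le_sum fun B hB => hFK B (hV hB)
      _ = K * coverN ℬ := by rw [Finset.sum_const, smul_eq_mul, hcard, mul_comm]

lemma coverN_le_mul_coverN {g : Z → Y} {𝒜 : Set (Set Z)} {ℬ : Set (Set Y)} {K : ℕ}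
    (hℬ : HasFiniteSubcover ℬ)
    (H : ∀ B ∈ ℬ, ∃ F : Finset (Set Z), ↑F ⊆ 𝒜 ∧ F.card ≤ K ∧ g ⁻¹' B ⊆ ⋃₀ (F : Set (Set Z))) :
    coverN 𝒜 ≤ K * coverN ℬ := by
  obtain ⟨V, hV, hcov, hcard⟩ := hℬ.exists_subcover_card_le_mul H
  exact (coverN_le_card_s13 hV hcov).trans hcard

lemma HasFiniteSubcover.exists_subcover_card_le {g : Z → Y} {𝒜 : Set (Set Z)}
    {ℬ : Set (Set Y)} (hℬ : HasFiniteSubcover ℬ) (H : ∀ B ∈ ℬ, ∃ A ∈ 𝒜, g ⁻¹' B ⊆ A) :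
    ∃ V : Finset (Set Z), ↑V ⊆ 𝒜 ∧ ⋃₀ (V : Set (Set Z)) = univ ∧ V.card ≤ coverN ℬ := by
  simpa using hℬ.exists_subcover_card_le_mul (K := 1) fun B hB =>
    let ⟨A, hA, hBA⟩ := H B hB
    ⟨{A}, by simpa using hA, by simp, by simpa using hBA⟩

lemma coverN_le_coverN_of_preimage_subset {g : Z → Y} {𝒜 : Set (Set Z)} {ℬ : Set (Set Y)}
    (hℬ : HasFiniteSubcover ℬ) (H : ∀ B ∈ ℬ, ∃ A ∈ 𝒜, g ⁻¹' B ⊆ A) :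
    coverN 𝒜 ≤ coverN ℬ := by
  obtain ⟨V, hV, hcov, hcard⟩ := hℬ.exists_subcover_card_le H
  exact (coverN_le_card_s13 hV hcov).trans hcard

lemma HasFiniteSubcover.of_refines {𝒜 ℬ : Set (Set Z)} (hℬ : HasFiniteSubcover ℬ)
    (H : ∀ B ∈ ℬ, ∃ A ∈ 𝒜, B ⊆ A) : HasFiniteSubcover 𝒜 := by
  obtain ⟨V, hV, hcov, -⟩ := hℬ.exists_subcover_card_le (g := id) H
  exact ⟨V, hV, hcov⟩

lemma sUnion_image_union_eq_univ {𝒞 : Set (Set Z)} (h : ⋃₀ 𝒞 = univ) (C₀ : Set Z) :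
    ⋃₀ ((· ∪ C₀) '' 𝒞) = univ := by
  refine eq_univ_of_forall fun z => ?_
  obtain ⟨C, hC, hzC⟩ := mem_sUnion.1 (h ▸ mem_univ z)
  exact ⟨C ∪ C₀, mem_image_of_mem _ hC, Or.inl hzC⟩

lemma coverN_le_one_of_subsingleton [Subsingleton Z] {𝒜 : Set (Set Z)} (h : ⋃₀ 𝒜 = univ) :
    coverN 𝒜 ≤ 1 := by
  rcases isEmpty_or_nonempty Z with hZ | ⟨⟨z⟩⟩
  · exact (coverN_le_card_s13 (V := ∅) (by simp) (eq_univ_of_forall isEmptyElim)).trans zero_le_one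
  · obtain ⟨A, hA, hzA⟩ := mem_sUnion.1 (h ▸ mem_univ z)
    refine (coverN_le_card_s13 (V := {A}) (by simpa using hA) ?_).trans (by simp)
    simpa using eq_univ_of_forall fun y => Subsingleton.elim z y ▸ hzA

lemma covH_mono {𝒜 : Set (Set Z)} {ℬ : Set (Set Y)} (h : coverN 𝒜 ≤ coverN ℬ) :
    covH 𝒜 ≤ covH ℬ := by
  rcases Nat.eq_zero_or_pos (coverN 𝒜) with h0 | hpos
  · simp [covH, h0]
  exact ENNReal.ofReal_le_ofReal (Real.log_le_log (by exact_mod_cast hpos) (by exact_mod_cast h))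

lemma covH_le_mul_log_two_add {𝒜 : Set (Set Z)} {ℬ : Set (Set Y)} {q : ℕ}
    (h : coverN 𝒜 ≤ 2 ^ q * coverN ℬ) :
    covH 𝒜 ≤ q * ENNReal.ofReal (Real.log 2) + covH ℬ := by
  rcases Nat.eq_zero_or_pos (coverN ℬ) with h0 | hpos
  · simp [covH, show coverN 𝒜 = 0 by simpa [h0] using h]
  calc covH 𝒜 ≤ ENNReal.ofReal (Real.log ((2 ^ q * coverN ℬ : ℕ) : ℝ)) := by
        rcases Nat.eq_zero_or_pos (coverN 𝒜) with h0 | hpos'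
        · simp [covH, h0]
        exact ENNReal.ofReal_le_ofReal
          (Real.log_le_log (by exact_mod_cast hpos') (by exact_mod_cast h))
    _ = ENNReal.ofReal (q * Real.log 2 + Real.log (coverN ℬ)) := by
        rw [Nat.cast_mul, Nat.cast_pow, Real.log_mul (by positivity) (by positivity),
          Real.log_pow, Nat.cast_ofNat]
    _ ≤ q * ENNReal.ofReal (Real.log 2) + covH ℬ := by
        rw [covH, ← ENNReal.ofReal_natCast q, ← ENNReal.ofReal_mul (Nat.cast_nonneg q)]
        exact ENNReal.ofReal_add_le

end Covers

section Joins

variable {Z : Type*} {g : Z → Z}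

lemma iterJoin_mono {𝒰 𝒱 : Set (Set Z)} (h : 𝒰 ⊆ 𝒱) (n : ℕ) :
    iterJoin g 𝒰 n ⊆ iterJoin g 𝒱 n := by
  rintro _ ⟨u, hu, rfl⟩
  exact ⟨u, fun i => h (hu i), rfl⟩

lemma sUnion_iterJoin {𝒰 : Set (Set Z)} (h : ⋃₀ 𝒰 = univ) (n : ℕ) :
    ⋃₀ iterJoin g 𝒰 n = univ := by
  refine eq_univ_of_forall fun z => ?_
  have : ∀ i : Fin n, ∃ U ∈ 𝒰, g^[i] z ∈ U := fun i => mem_sUnion.1 (h ▸ mem_univ (g^[i] z))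
  choose u hu hzu using this
  exact ⟨_, ⟨u, hu, rfl⟩, mem_iInter.2 hzu⟩

lemma Set.Finite.iterJoin {𝒰 : Set (Set Z)} (h : 𝒰.Finite) (n : ℕ) :
    (iterJoin g 𝒰 n).Finite := by
  have := h.to_subtype
  refine (finite_range fun u : Fin n → 𝒰 => ⋂ i : Fin n, g^[i] ⁻¹' (u i : Set Z)).subset ?_
  rintro _ ⟨u, hu, rfl⟩
  exact ⟨fun i => ⟨u i, hu i⟩, rfl⟩

lemma HasFiniteSubcover.iterJoin {𝒰 : Set (Set Z)} (h : HasFiniteSubcover 𝒰) (n : ℕ) :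
    HasFiniteSubcover (_root_.iterJoin g 𝒰 n) := by
  obtain ⟨V, hV, hcov⟩ := h
  have hfin := V.finite_toSet.iterJoin (g := g) n
  exact ⟨hfin.toFinset, by simpa using iterJoin_mono hV n, by simpa using sUnion_iterJoin hcov n⟩

lemma iterJoin_refines_iterJoin_iterate {𝒰 : Set (Set Z)} {m : ℕ} (hm : 0 < m) (q : ℕ) :
    ∀ B ∈ iterJoin g 𝒰 (m * q), ∃ A ∈ iterJoin g^[m] 𝒰 q, B ⊆ A := by
  rintro _ ⟨u, hu, rfl⟩
  have hlt : ∀ i : Fin q, m * i < m * q := fun i => Nat.mul_lt_mul_of_pos_left i.2 hm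
  refine ⟨_, ⟨fun i => u ⟨m * i, hlt i⟩, fun i => hu _, rfl⟩,
    fun z hz => mem_iInter.2 fun i => ?_⟩
  rw [mem_preimage, ← Function.iterate_mul]
  exact mem_iInter.1 hz ⟨m * i, hlt i⟩

lemma iterJoin_iterate_iterJoin_refines {𝒲 : Set (Set Z)} {m q N : ℕ} (hm : 0 < m)
    (hN : N ≤ m * q) :
    ∀ D ∈ iterJoin g^[m] (iterJoin g 𝒲 m) q, ∃ A ∈ iterJoin g 𝒲 N, D ⊆ A := by
  rintro _ ⟨C, hC, rfl⟩
  choose w hw hCw using hC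
  let blk (l : Fin N) : Fin q := ⟨l / m, Nat.div_lt_of_lt_mul (by have := l.2; omega)⟩
  let pos (l : Fin N) : Fin m := ⟨l % m, Nat.mod_lt _ hm⟩
  refine ⟨⋂ l : Fin N, g^[l] ⁻¹' w (blk l) (pos l), ⟨fun l => w (blk l) (pos l),
    fun l => hw _ _, rfl⟩, fun z hz => mem_iInter.2 fun l => ?_⟩
  have hzC := mem_iInter.1 hz (blk l)
  rw [mem_preimage, hCw, mem_iInter] at hzC
  have := hzC (pos l)
  rwa [mem_preimage, ← Function.iterate_mul, ← Function.iterate_add_apply,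
    Nat.mod_add_div] at this

lemma coverN_iterJoin_le_two_pow_mul {𝒞 : Set (Set Z)} {C₀ : Set Z} (h𝒞 : HasFiniteSubcover 𝒞)
    (hC₀ : C₀ ∈ 𝒞) (q : ℕ) :
    coverN (iterJoin g 𝒞 q) ≤ 2 ^ q * coverN (iterJoin g ((· ∪ C₀) '' 𝒞) q) := by
  classical
  have h𝒱 : HasFiniteSubcover ((· ∪ C₀) '' 𝒞) :=
    h𝒞.of_refines fun C hC => ⟨C ∪ C₀, mem_image_of_mem _ hC, subset_union_left⟩
  refine coverN_le_mul_coverN (g := id) (h𝒱.iterJoin q) ?_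
  rintro _ ⟨v, hv, rfl⟩
  choose C hC hCv using hv
  let cell (b : Fin q → Bool) : Set Z := ⋂ i : Fin q, g^[i] ⁻¹' (if b i then C i else C₀)
  refine ⟨Finset.univ.image cell, ?_, ?_, fun z hz => ?_⟩
  · intro A hA
    obtain ⟨b, -, rfl⟩ := Finset.mem_image.1 hA
    exact ⟨_, fun i => by split_ifs; exacts [hC i, hC₀], rfl⟩
  · exact Finset.card_image_le.trans (by simp)
  · refine ⟨cell fun i => decide (g^[i] z ∈ C i), by simp, mem_iInter.2 fun i => ?_⟩
    have hzi : g^[i] z ∈ v i := mem_iInter.1 hz i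
    rw [← hCv i] at hzi
    by_cases hCi : g^[i] z ∈ C i
    · simp [hCi]
    · simpa [hCi] using hzi

lemma nat_mul_cEntCover_le {𝒲 : Set (Set Z)} (h𝒲 : HasFiniteSubcover 𝒲) {m : ℕ} (hm : 0 < m)
    {C₀ : Set Z} (hC₀ : C₀ ∈ iterJoin g 𝒲 m) :
    m * cEntCover g 𝒲 ≤
      ENNReal.ofReal (Real.log 2) + cEntCover g^[m] ((· ∪ C₀) '' iterJoin g 𝒲 m) := by
  refine nat_mul_limsup_div_le hm ENNReal.ofReal_ne_top fun N q hN => covH_le_mul_log_two_add ?_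
  calc coverN (iterJoin g 𝒲 N) ≤ coverN (iterJoin g^[m] (iterJoin g 𝒲 m) q) :=
        coverN_le_coverN_of_preimage_subset (g := id) ((h𝒲.iterJoin m).iterJoin q)
          (iterJoin_iterate_iterJoin_refines hm hN)
    _ ≤ 2 ^ q * coverN (iterJoin g^[m] ((· ∪ C₀) '' iterJoin g 𝒲 m) q) :=
        coverN_iterJoin_le_two_pow_mul (h𝒲.iterJoin m) hC₀ q

lemma cEntCover_iterate_le {𝒰 : Set (Set Z)} (h𝒰 : HasFiniteSubcover 𝒰) {m : ℕ} (hm : 0 < m) :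
    cEntCover g^[m] 𝒰 ≤ m * cEntCover g 𝒰 := by
  have hm0 : (m : ℝ≥0∞) ≠ 0 := by exact_mod_cast hm.ne'
  have hstep : ∀ᶠ q : ℕ in atTop, covH (iterJoin g^[m] 𝒰 q) / q ≤
      m * (covH (iterJoin g 𝒰 (m * q)) / (m * q : ℕ)) := by
    refine Eventually.of_forall fun q => ?_
    rw [← mul_div_assoc, Nat.cast_mul, ENNReal.mul_div_mul_left _ _ hm0 (ENNReal.natCast_ne_top m)]
    exact ENNReal.div_le_div_right (covH_mono (coverN_le_coverN_of_preimage_subset (g := id)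
      (h𝒰.iterJoin _) (iterJoin_refines_iterJoin_iterate hm q))) _
  have hmq : Tendsto (fun q : ℕ => m * q) atTop atTop :=
    tendsto_atTop_mono (fun q => Nat.le_mul_of_pos_left q hm) tendsto_id
  calc cEntCover g^[m] 𝒰
      ≤ atTop.limsup (fun q : ℕ => m * (covH (iterJoin g 𝒰 (m * q)) / (m * q : ℕ))) :=
        limsup_le_limsup hstep
    _ = m * atTop.limsup (fun q : ℕ => covH (iterJoin g 𝒰 (m * q)) / (m * q : ℕ)) :=
        ENNReal.limsup_const_mul_of_ne_top (ENNReal.natCast_ne_top m)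
    _ ≤ m * cEntCover g 𝒰 := by
        gcongr
        exact hmq.limsup_comp_le_limsup (u := fun n : ℕ => covH (iterJoin g 𝒰 n) / n)

end Joins

section CoCompact

variable {Z : Type*} [TopologicalSpace Z]

lemma IsOpen.isCoCompactOpen [CompactSpace Z] {U : Set Z} (h : IsOpen U) : IsCoCompactOpen U :=
  ⟨h, h.isClosed_compl.isCompact⟩

lemma IsCoCompactCover.hasFiniteSubcover {𝒰 : Set (Set Z)} (h : IsCoCompactCover 𝒰) :
    HasFiniteSubcover 𝒰 := by
  classical
  rcases 𝒰.eq_empty_or_nonempty with rfl | ⟨U₀, hU₀⟩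
  · exact ⟨∅, by simp, by simpa using h.2⟩
  obtain ⟨𝒱, h𝒱, hfin, hcov⟩ := (h.1 U₀ hU₀).2.elim_finite_subcover_image (c := id)
    (fun U hU => (h.1 U hU).1) (by simp [← sUnion_eq_biUnion, h.2])
  refine ⟨insert U₀ hfin.toFinset, by simpa [insert_subset_iff] using ⟨hU₀, h𝒱⟩,
    eq_univ_of_forall fun z => ?_⟩
  by_cases hz : z ∈ U₀
  · exact ⟨U₀, by simp, hz⟩
  · obtain ⟨U, hU, hzU⟩ := mem_iUnion₂.1 (hcov hz)
    exact ⟨U, by simp [hU], hzU⟩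

lemma isOpen_of_mem_iterJoin {g : Z → Z} (hg : Continuous g) {𝒰 : Set (Set Z)}
    (h𝒰 : ∀ U ∈ 𝒰, IsOpen U) {n : ℕ} {W : Set Z} (hW : W ∈ iterJoin g 𝒰 n) : IsOpen W := by
  obtain ⟨u, hu, rfl⟩ := hW
  exact isOpen_iInter_of_finite fun i => (h𝒰 _ (hu i)).preimage (hg.iterate i)

lemma IsProperMap.tendsto_coclosedCompact {Y : Type*} [TopologicalSpace Y] {f : Z → Y}
    (hf : IsProperMap f) : Tendsto f (coclosedCompact Z) (coclosedCompact Y) :=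
  hasBasis_coclosedCompact.tendsto_right_iff.2 fun K hK => hasBasis_coclosedCompact.mem_iff.2
    ⟨f ⁻¹' K, ⟨hK.1.preimage hf.continuous, hf.isCompact_preimage hK.2⟩, subset_rfl⟩

lemma cEnt_eq_zero_of_subsingleton [Subsingleton Z] (g : Z → Z) : cEnt g = 0 := by
  refine le_antisymm (iSup₂_le fun 𝒰 h𝒰 => ?_) zero_le
  have hH : ∀ n, covH (iterJoin g 𝒰 n) = 0 := fun n => by
    have := coverN_le_one_of_subsingleton (sUnion_iterJoin (g := g) h𝒰.2 n)
    interval_cases h : coverN (iterJoin g 𝒰 n) <;> simp [covH, h]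
  simp [cEntCover, hH]

end CoCompact

namespace OnePoint

variable {X Y : Type*}

def insertInfty (U : Set X) : Set (OnePoint X) := insert (∞ : OnePoint X) ((↑) '' U)

@[simp]
lemma infty_mem_insertInfty (U : Set X) : (∞ : OnePoint X) ∈ insertInfty U := mem_insert _ _

@[simp]
lemma coe_mem_insertInfty {U : Set X} {x : X} : (x : OnePoint X) ∈ insertInfty U ↔ x ∈ U := by
  simp [insertInfty]

lemma coe_preimage_insertInfty (U : Set X) : ((↑) : X → OnePoint X) ⁻¹' insertInfty U = U := by
  ext
  simp

lemma insertInfty_coe_preimage {S : Set (OnePoint X)} (h : (∞ : OnePoint X) ∈ S) :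
    insertInfty (((↑) : X → OnePoint X) ⁻¹' S) = S := by
  ext p
  induction p using OnePoint.rec <;> simp [h]

lemma image_insertInfty_preimCover_coe {𝒱 : Set (Set (OnePoint X))}
    (h : ∀ S ∈ 𝒱, (∞ : OnePoint X) ∈ S) :
    insertInfty '' preimCover (↑) 𝒱 = 𝒱 := by
  rw [preimCover, image_image, image_congr fun S hS => insertInfty_coe_preimage (h S hS),
    image_id']

lemma map_preimage_insertInfty (f : X → Y) (U : Set Y) :
    OnePoint.map f ⁻¹' insertInfty U = insertInfty (f ⁻¹' U) := by
  ext p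
  induction p using OnePoint.rec <;> simp

lemma iInter_insertInfty {ι : Sort*} (U : ι → Set X) :
    ⋂ i, insertInfty (U i) = insertInfty (⋂ i, U i) := by
  ext p
  induction p using OnePoint.rec <;> simp

lemma iterJoin_map_image_insertInfty (f : X → X) (𝒰 : Set (Set X)) (n : ℕ) :
    iterJoin (OnePoint.map f) (insertInfty '' 𝒰) n = insertInfty '' iterJoin f 𝒰 n := by
  ext W
  constructor
  · rintro ⟨u, hu, rfl⟩
    choose v hv hvu using hu
    refine ⟨_, ⟨v, hv, rfl⟩, ?_⟩
    simp_rw [← hvu, map_iterate, map_preimage_insertInfty, iInter_insertInfty]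
  · rintro ⟨_, ⟨v, hv, rfl⟩, rfl⟩
    refine ⟨fun i => insertInfty (v i), fun i => mem_image_of_mem _ (hv i), ?_⟩
    simp_rw [map_iterate, map_preimage_insertInfty, iInter_insertInfty]

lemma coverN_image_insertInfty [Nonempty X] {𝒜 : Set (Set X)} (h : HasFiniteSubcover 𝒜)
    (h' : HasFiniteSubcover (insertInfty '' 𝒜)) : coverN (insertInfty '' 𝒜) = coverN 𝒜 := by
  obtain ⟨x₀⟩ := ‹Nonempty X›
  refine le_antisymm ?_ ?_
  · -- any retraction `OnePoint X → X` pulls `A` back into `insertInfty A`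
    refine coverN_le_coverN_of_preimage_subset (g := fun p => p.elim x₀ id) h
      fun A hA => ⟨_, mem_image_of_mem _ hA, fun p hp => ?_⟩
    induction p using OnePoint.rec <;> simp_all
  · refine coverN_le_coverN_of_preimage_subset (g := ((↑) : X → OnePoint X)) h' ?_
    rintro _ ⟨A, hA, rfl⟩
    exact ⟨A, hA, (coe_preimage_insertInfty A).subset⟩

lemma cEntCover_map_image_insertInfty [Nonempty X] (f : X → X) {𝒰 : Set (Set X)}
    (h : HasFiniteSubcover 𝒰) (h' : HasFiniteSubcover (insertInfty '' 𝒰)) :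
    cEntCover (OnePoint.map f) (insertInfty '' 𝒰) = cEntCover f 𝒰 := by
  have hn : ∀ n, coverN (iterJoin (OnePoint.map f) (insertInfty '' 𝒰) n) =
      coverN (iterJoin f 𝒰 n) := fun n => by
    rw [iterJoin_map_image_insertInfty]
    refine coverN_image_insertInfty (h.iterJoin n) ?_
    rw [← iterJoin_map_image_insertInfty]
    exact h'.iterJoin n
  simp only [cEntCover, covH, hn]

variable [TopologicalSpace X]

lemma isOpen_insertInfty {U : Set X} (h : IsCoCompactOpen U) : IsOpen (insertInfty U) := by
  rw [isOpen_iff_of_mem (infty_mem_insertInfty U), coe_preimage_insertInfty]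
  exact ⟨h.1.isClosed_compl, h.2⟩

lemma _root_.IsCoCompactCover.image_insertInfty [Nonempty X] {𝒰 : Set (Set X)}
    (h : IsCoCompactCover 𝒰) : IsCoCompactCover (insertInfty '' 𝒰) := by
  obtain ⟨x₀⟩ := ‹Nonempty X›
  refine ⟨?_, eq_univ_of_forall fun p => ?_⟩
  · rintro _ ⟨U, hU, rfl⟩
    exact (isOpen_insertInfty (h.1 U hU)).isCoCompactOpen
  · obtain ⟨U, hU, hpU⟩ := mem_sUnion.1 (h.2 ▸ mem_univ (p.elim x₀ id))
    refine ⟨insertInfty U, mem_image_of_mem _ hU, ?_⟩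
    induction p using OnePoint.rec <;> simp_all

lemma isCoCompactOpen_coe_preimage {S : Set (OnePoint X)} (hS : IsOpen S)
    (h : (∞ : OnePoint X) ∈ S) : IsCoCompactOpen (((↑) : X → OnePoint X) ⁻¹' S) := by
  rw [isOpen_iff_of_mem h] at hS
  exact ⟨isClosed_compl_iff.1 hS.1, hS.2⟩

lemma isCoCompactCover_preimCover_coe {𝒱 : Set (Set (OnePoint X))} (hopen : ∀ S ∈ 𝒱, IsOpen S)
    (h : ∀ S ∈ 𝒱, (∞ : OnePoint X) ∈ S) (hcov : ⋃₀ 𝒱 = univ) :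
    IsCoCompactCover (preimCover ((↑) : X → OnePoint X) 𝒱) := by
  refine ⟨?_, ?_⟩
  · rintro _ ⟨S, hS, rfl⟩
    exact isCoCompactOpen_coe_preimage (hopen S hS) (h S hS)
  · rw [preimCover, sUnion_image, ← preimage_sUnion, hcov, preimage_univ]

lemma cEnt_le_cEnt_map [Nonempty X] (f : X → X) : cEnt f ≤ cEnt (OnePoint.map f) := by
  refine iSup₂_le fun 𝒰 h𝒰 => ?_
  have hT := h𝒰.image_insertInfty
  rw [← cEntCover_map_image_insertInfty f h𝒰.hasFiniteSubcover hT.hasFiniteSubcover]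
  exact le_iSup₂ (f := fun 𝒲 (_ : IsCoCompactCover 𝒲) => cEntCover (OnePoint.map f) 𝒲) _ hT

lemma nat_mul_cEntCover_map_le [Nonempty X] {f : X → X} {𝒲 : Set (Set (OnePoint X))}
    (h𝒲 : HasFiniteSubcover 𝒲) {m : ℕ} (hm : 0 < m) {C₀ : Set (OnePoint X)}
    (hC₀ : C₀ ∈ iterJoin (OnePoint.map f) 𝒲 m) {𝒰 : Set (Set X)} (h𝒰 : IsCoCompactCover 𝒰)
    (h𝒰𝒲 : insertInfty '' 𝒰 = (· ∪ C₀) '' iterJoin (OnePoint.map f) 𝒲 m) :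
    m * cEntCover (OnePoint.map f) 𝒲 ≤ ENNReal.ofReal (Real.log 2) + m * cEnt f :=
  calc m * cEntCover (OnePoint.map f) 𝒲
      ≤ ENNReal.ofReal (Real.log 2) + cEntCover (OnePoint.map f^[m]) (insertInfty '' 𝒰) := by
        rw [h𝒰𝒲, ← map_iterate]
        exact nat_mul_cEntCover_le h𝒲 hm hC₀
    _ = ENNReal.ofReal (Real.log 2) + cEntCover f^[m] 𝒰 := by
        rw [cEntCover_map_image_insertInfty _ h𝒰.hasFiniteSubcover
          h𝒰.image_insertInfty.hasFiniteSubcover]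
    _ ≤ ENNReal.ofReal (Real.log 2) + m * cEntCover f 𝒰 := by
        gcongr
        exact cEntCover_iterate_le h𝒰.hasFiniteSubcover hm
    _ ≤ ENNReal.ofReal (Real.log 2) + m * cEnt f := by
        gcongr
        exact le_iSup₂ (f := fun 𝒰 (_ : IsCoCompactCover 𝒰) => cEntCover f 𝒰) _ h𝒰

lemma cEnt_map_le [Nonempty X] {f : X → X} (hf : IsProperMap f) :
    cEnt (OnePoint.map f) ≤ cEnt f := by
  have hcont : Continuous (OnePoint.map f) :=
    continuous_map hf.continuous hf.tendsto_coclosedCompact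
  refine iSup₂_le fun 𝒲 h𝒲 => le_of_forall_nat_mul_le_add
    (ℓ := ENNReal.ofReal (Real.log 2)) ENNReal.ofReal_ne_top fun m hm => ?_
  obtain ⟨W₀, hW₀, hW₀infty⟩ := mem_sUnion.1 (h𝒲.2 ▸ mem_univ (∞ : OnePoint X))
  set C₀ := ⋂ j : Fin m, (OnePoint.map f)^[j] ⁻¹' W₀
  have hC₀ : C₀ ∈ iterJoin (OnePoint.map f) 𝒲 m := ⟨fun _ => W₀, fun _ => hW₀, rfl⟩
  set 𝒱 := (· ∪ C₀) '' iterJoin (OnePoint.map f) 𝒲 m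
  have h𝒱infty : ∀ S ∈ 𝒱, (∞ : OnePoint X) ∈ S := by
    rintro _ ⟨C, -, rfl⟩
    exact Or.inr (mem_iInter.2 fun j => by simpa [map_iterate_infty] using hW₀infty)
  have h𝒱open : ∀ S ∈ 𝒱, IsOpen S := by
    have h𝒲open := fun W hW => (h𝒲.1 W hW).1
    rintro _ ⟨C, hC, rfl⟩
    exact (isOpen_of_mem_iterJoin hcont h𝒲open hC).union (isOpen_of_mem_iterJoin hcont h𝒲open hC₀)
  exact nat_mul_cEntCover_map_le h𝒲.hasFiniteSubcover hm hC₀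
    (isCoCompactCover_preimCover_coe h𝒱open h𝒱infty
      (sUnion_image_union_eq_univ (sUnion_iterJoin h𝒲.2 m) C₀))
    (image_insertInfty_preimCover_coe h𝒱infty)

end OnePoint

theorem dEnt_eq_dEnt_onePoint_general {X : Type*} [MetricSpace X]
    (f : X → X) (hf : IsPerfectMap f)
    (m : MetricSpace (OnePoint X))
    (hext : ∀ x y : X, m.dist ↑x ↑y = dist x y) :
    dEnt dist f = dEnt m.dist (onePointExtend f) ∧ cEnt f = cEnt (onePointExtend f) := by
  rw [onePointExtend_eq_map]
  refine ⟨(dEnt_map hext f).symm, ?_⟩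
  rcases isEmpty_or_nonempty X with hX | hX
  · rw [cEnt_eq_zero_of_subsingleton, cEnt_eq_zero_of_subsingleton]
  · exact le_antisymm (cEnt_le_cEnt_map f)
      (cEnt_map_le (isProperMap_iff_isClosedMap_and_compact_fibers.2 hf))

/-- Let `d` be a compact-type metric on the locally compact separable metric space
`X`, with extension `d̃` to the one-point compactification, and let `f̃` be the extension of the
perfect map `f` fixing the point at infinity. Then `h^d(f) = h^{d̃}(f̃)` and `c(f) = c(f̃)`. -/
theorem dEnt_eq_dEnt_onePoint {X : Type*} [MetricSpace X] [LocallyCompactSpace X]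
    [TopologicalSpace.SeparableSpace X]
    (f : X → X) (hf : IsPerfectMap f)
    (m : MetricSpace (OnePoint X))
    (hm : m.toUniformSpace.toTopologicalSpace = (inferInstance : TopologicalSpace (OnePoint X)))
    (hext : ∀ x y : X, m.dist ↑x ↑y = dist x y) :
    dEnt dist f = dEnt m.dist (onePointExtend f) ∧ cEnt f = cEnt (onePointExtend f) :=
  dEnt_eq_dEnt_onePoint_general f hf m hext
end
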